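/- Uniqueness of the corresponding orthogonal point: let ξ₁, ξ₂, ξ₃ ∈ ℚ⁴ be linearly independent Chern characters. Then there is at most one triple (x, y, d) ∈ ℚ² × ℚ such that the rank-one character (1, x, y, d) satisfies (ξᵢ, (1,x,y,d)) = 0 for all i = 1, 2, 3. -/

import Mathlib

/-- The Euler pairing `(ζ,ζ') := χ(ζ·ζ')` on Chern characters `(r,a,b,c) ∈ ℚ⁴`
(recorded as functions `Fin 4 → ℚ`), computed explicitly from the product of Chern
characters on ℙ¹×ℙ¹. -/
def eulerPair (ξ ζ : Fin 4 → ℚ) : ℚ :=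
  ξ 0 * ζ 3 + ξ 3 * ζ 0 + ξ 1 * ζ 2 + ξ 2 * ζ 1 +
    ξ 0 * ζ 1 + ξ 1 * ζ 0 + ξ 0 * ζ 2 + ξ 2 * ζ 0 + ξ 0 * ζ 0

/-! The rank-one characters `(1,x,y,d)` orthogonal to `ξ₁, ξ₂, ξ₃` give linear functionals
`(·, (1,x,y,d))` in the annihilator of `span {ξ₁, ξ₂, ξ₃}`, which is a line in the dual of `ℚ⁴`.
All of them take the value `1` at `(0,0,0,1)`, so they coincide; and the functional recovers
`(x, y, d)` from its values at the other three basis vectors. -/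

open Module Submodule Set

section

variable {K V : Type*} [Field K] [AddCommGroup V] [Module K V]

theorem Submodule.eq_of_mem_of_apply_eq {S : Submodule K V} (hS : finrank K S = 1)
    {u v : V} (hu : u ∈ S) (hv : v ∈ S) (φ : V →ₗ[K] K) (huv : φ u = φ v) (hu0 : φ u ≠ 0) :
    u = v := by
  have hu_ne : u ≠ 0 := by rintro rfl; exact hu0 (map_zero φ)
  have hS_eq : S = K ∙ u := eq_span_singleton_of_mem_of_finrank_eq_one hS hu hu_ne
  obtain ⟨c, rfl⟩ := mem_span_singleton.mp (hS_eq ▸ hv)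
  have hc : c = 1 := by
    rw [map_smul, smul_eq_mul] at huv
    exact (mul_eq_right₀ hu0).mp huv.symm
  rw [hc, one_smul]

theorem Subspace.finrank_dualAnnihilator_span_range_add_card [FiniteDimensional K V]
    {ι : Type*} [Fintype ι] {ξ : ι → V} (hξ : LinearIndependent K ξ) :
    finrank K (span K (range ξ)).dualAnnihilator + Fintype.card ι = finrank K V := by
  rw [← finrank_span_eq_card hξ, add_comm, Subspace.finrank_add_finrank_dualAnnihilator_eq]

theorem Module.Dual.eq_of_forall_apply_eq_zero_of_apply_eq [FiniteDimensional K V]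
    {ι : Type*} [Fintype ι] {ξ : ι → V} (hξ : LinearIndependent K ξ)
    (hV : finrank K V = Fintype.card ι + 1) {f g : Dual K V}
    (hf : ∀ i, f (ξ i) = 0) (hg : ∀ i, g (ξ i) = 0) {e : V} (he : f e = g e) (he0 : f e ≠ 0) :
    f = g := by
  have hmem {φ : Dual K V} (hφ : ∀ i, φ (ξ i) = 0) : φ ∈ (span K (range ξ)).dualAnnihilator := by
    have hle : span K (range ξ) ≤ LinearMap.ker φ := span_le.mpr (by rintro _ ⟨i, rfl⟩; exact hφ i)
    exact (mem_dualAnnihilator φ).mpr hle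
  have hrank := Subspace.finrank_dualAnnihilator_span_range_add_card hξ
  exact eq_of_mem_of_apply_eq (by omega) (hmem hf) (hmem hg) (Dual.eval K V e) he he0

end

def eulerPairing : (Fin 4 → ℚ) →ₗ[ℚ] (Fin 4 → ℚ) →ₗ[ℚ] ℚ :=
  LinearMap.mk₂ ℚ eulerPair
    (fun _ _ _ => by simp only [eulerPair, Pi.add_apply]; ring)
    (fun _ _ _ => by simp only [eulerPair, Pi.smul_apply, smul_eq_mul]; ring)
    (fun _ _ _ => by simp only [eulerPair, Pi.add_apply]; ring)
    (fun _ _ _ => by simp only [eulerPair, Pi.smul_apply, smul_eq_mul]; ring)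

theorem eulerPair_single_three (ζ : Fin 4 → ℚ) : eulerPair (Pi.single 3 1) ζ = ζ 0 := by
  simp [eulerPair]

theorem eq_of_forall_eulerPair_eq {x y d x' y' d' : ℚ}
    (h : ∀ ξ, eulerPair ξ ![1, x, y, d] = eulerPair ξ ![1, x', y', d']) :
    (x, y, d) = (x', y', d') := by
  have h₀ : d + x + y + 1 = d' + x' + y' + 1 := by simpa [eulerPair] using h (Pi.single 0 1)
  have h₁ : y + 1 = y' + 1 := by simpa [eulerPair] using h (Pi.single 1 1)
  have h₂ : x + 1 = x' + 1 := by simpa [eulerPair] using h (Pi.single 2 1)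
  simp only [Prod.mk.injEq]
  refine ⟨?_, ?_, ?_⟩ <;> linarith

/-- Uniqueness of the corresponding orthogonal point: if `ξ₁, ξ₂, ξ₃` are linearly
independent Chern characters, then there is at most one `(x,y,d)` such that the
rank-one character `(1,x,y,d)` is orthogonal to all three `ξᵢ`. -/
theorem orthogonal_point_unique (ξ₁ ξ₂ ξ₃ : Fin 4 → ℚ)
    (h : LinearIndependent ℚ ![ξ₁, ξ₂, ξ₃]) :
    ∀ x y d x' y' d' : ℚ,
      (eulerPair ξ₁ ![1, x, y, d] = 0 ∧ eulerPair ξ₂ ![1, x, y, d] = 0 ∧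
        eulerPair ξ₃ ![1, x, y, d] = 0) →
      (eulerPair ξ₁ ![1, x', y', d'] = 0 ∧ eulerPair ξ₂ ![1, x', y', d'] = 0 ∧
        eulerPair ξ₃ ![1, x', y', d'] = 0) →
      (x, y, d) = (x', y', d') := by
  intro x y d x' y' d' ⟨h₁, h₂, h₃⟩ ⟨h₁', h₂', h₃'⟩
  have hV : finrank ℚ (Fin 4 → ℚ) = Fintype.card (Fin 3) + 1 := by simp
  have key : eulerPairing.flip ![1, x, y, d] = eulerPairing.flip ![1, x', y', d'] := by
    refine Dual.eq_of_forall_apply_eq_zero_of_apply_eq h hV ?_ ?_ (e := Pi.single 3 1) ?_ ?_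
    · intro i; fin_cases i <;> assumption
    · intro i; fin_cases i <;> assumption
    · simp [eulerPairing, eulerPair_single_three]
    · simp [eulerPairing, eulerPair_single_three]
  exact eq_of_forall_eulerPair_eq (LinearMap.congr_fun key)
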